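/- Let r : [0,1/2] × (−π/6, π/6) → ℝ be the implicitly defined function satisfying (1+3t) r³ − 9(1+t) r − 6√3 sin(3θ) = 0 with r_A(θ)/(1+t) ≤ r(t,θ) ≤ r_A(θ), where r_A(θ) = 2√3 cos(θ−π/6). Then the logarithmic derivative satisfies 0 ≤ r_θ(t,θ)/r(t,θ) ≤ tan(π/6 − θ) ≤ √3 for all θ ∈ (−π/6, π/6). -/

import Mathlib

/-!
Write `φ = π/6 - θ`. Differentiating the cubic and multiplying by `r` turns the implicit
derivative into `r_θ / r = √3 cos 3θ / ((1+t) r + √3 sin 3θ)`, while the triple-angle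
formulas give `tan φ = √3 cos 3θ / (r_A + √3 sin 3θ)`, numerator and denominator both
carrying the factor `4 cos² φ - 1 > 0`. The lower bound `r_A ≤ (1+t) r` then compares the
two fractions.
-/

open Real

/-- The inverse polar equation of a side of the equilateral triangle `T₀`. -/
noncomputable def rA (θ : ℝ) : ℝ := 2 * Real.sqrt 3 * Real.cos (θ - π / 6)

open Filter Topology

theorem Real.half_lt_cos_of_abs_lt_pi_div_three {x : ℝ} (hx : |x| < π / 3) : 1 / 2 < cos x := by
  rw [← cos_abs, ← cos_pi_div_three]
  exact cos_lt_cos_of_nonneg_of_le_pi (abs_nonneg x) (by linarith [pi_pos]) hx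

theorem rA_eq (θ : ℝ) : rA θ = 2 * √3 * cos (π / 6 - θ) := by
  rw [rA, ← cos_neg, neg_sub]

theorem rA_add_sqrt_three_mul_sin_three_mul (θ : ℝ) :
    rA θ + √3 * sin (3 * θ) = √3 * cos (π / 6 - θ) * (4 * cos (π / 6 - θ) ^ 2 - 1) := by
  have h : 3 * θ = π / 2 - 3 * (π / 6 - θ) := by ring
  rw [rA_eq, h, sin_pi_div_two_sub, cos_three_mul]
  ring

theorem sqrt_three_mul_cos_three_mul (θ : ℝ) :
    √3 * cos (3 * θ) = √3 * sin (π / 6 - θ) * (4 * cos (π / 6 - θ) ^ 2 - 1) := by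
  have h : 3 * θ = π / 2 - 3 * (π / 6 - θ) := by ring
  rw [h, cos_pi_div_two_sub, sin_three_mul]
  linear_combination (-4 * √3 * sin (π / 6 - θ)) * sin_sq_add_cos_sq (π / 6 - θ)

theorem tan_pi_div_six_sub_eq_div {θ : ℝ} (hθ : 4 * cos (π / 6 - θ) ^ 2 - 1 ≠ 0) :
    tan (π / 6 - θ) = √3 * cos (3 * θ) / (rA θ + √3 * sin (3 * θ)) := by
  have h3 : √3 ≠ 0 := by positivity
  rw [sqrt_three_mul_cos_three_mul, rA_add_sqrt_three_mul_sin_three_mul,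
    mul_div_mul_right _ _ hθ, mul_div_mul_left _ _ h3, tan_eq_sin_div_cos]

theorem tan_pi_div_six_sub_lt_sqrt_three {θ : ℝ} (h₀ : -(π / 6) < θ)
    (h₁ : θ < 2 * π / 3) :
    tan (π / 6 - θ) < √3 := by
  rw [← tan_pi_div_three]
  exact tan_lt_tan_of_lt_of_lt_pi_div_two (by linarith) (by linarith [pi_pos]) (by linarith)

theorem four_mul_cos_sq_sub_one_pos {x : ℝ} (hx : |x| < π / 3) : 0 < 4 * cos x ^ 2 - 1 := by
  nlinarith [half_lt_cos_of_abs_lt_pi_div_three hx]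

theorem rA_pos {θ : ℝ} (hθ : |π / 6 - θ| < π / 3) : 0 < rA θ := by
  rw [rA_eq]
  exact mul_pos (by positivity) (by linarith [half_lt_cos_of_abs_lt_pi_div_three hθ])

theorem rA_add_sqrt_three_mul_sin_three_mul_pos {θ : ℝ} (hθ : |π / 6 - θ| < π / 3) :
    0 < rA θ + √3 * sin (3 * θ) := by
  rw [rA_add_sqrt_three_mul_sin_three_mul]
  exact mul_pos (mul_pos (by positivity) (by linarith [half_lt_cos_of_abs_lt_pi_div_three hθ]))
    (four_mul_cos_sq_sub_one_pos hθ)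

theorem mul_deriv_eq_of_eventually_cubic {r g : ℝ → ℝ} {a u x r' g' : ℝ}
    (h : ∀ᶠ y in 𝓝 x, a * r y ^ 3 - 9 * u * r y - 6 * g y = 0)
    (hr : HasDerivAt r r' x) (hg : HasDerivAt g g' x) :
    (a * r x ^ 2 - 3 * u) * r' = 2 * g' := by
  have hF := (((hr.pow 3).const_mul a).sub (hr.const_mul (9 * u))).sub (hg.const_mul 6)
  have h0 := hF.unique ((hasDerivAt_const x (0 : ℝ)).congr_of_eventuallyEq h)
  simp only [Nat.cast_ofNat] at h0
  linear_combination h0 / 3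

-- Multiplying the derivative relation by `R` and substituting the cubic removes `a`.
theorem div_eq_of_cubic {a u R R' g g' : ℝ} (hcubic : a * R ^ 3 - 9 * u * R - 6 * g = 0)
    (hderiv : (a * R ^ 2 - 3 * u) * R' = 2 * g') (hR : R ≠ 0) (hQ : u * R + g ≠ 0) :
    R' / R = g' / (3 * (u * R + g)) := by
  rw [div_eq_div_iff hR (by simpa using hQ)]
  linear_combination (R * hderiv - R' * hcubic) / 2

theorem deriv_div_eq_of_cubic_sin_three_mul {r : ℝ → ℝ} {a u x : ℝ}
    (h : ∀ᶠ y in 𝓝 x, a * r y ^ 3 - 9 * u * r y - 6 * √3 * sin (3 * y) = 0)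
    (hr : DifferentiableAt ℝ r x) (hx : r x ≠ 0) (hQ : u * r x + √3 * sin (3 * x) ≠ 0) :
    deriv r x / r x = √3 * cos (3 * x) / (u * r x + √3 * sin (3 * x)) := by
  have hcubic : ∀ᶠ y in 𝓝 x, a * r y ^ 3 - 9 * u * r y - 6 * (√3 * sin (3 * y)) = 0 :=
    h.mono fun y hy => by linear_combination hy
  have hg : HasDerivAt (fun y => √3 * sin (3 * y)) (3 * (√3 * cos (3 * x))) x :=
    (((hasDerivAt_id' x).const_mul 3).sin.const_mul √3).congr_deriv (by ring)
  rw [div_eq_of_cubic hcubic.self_of_nhds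
    (mul_deriv_eq_of_eventually_cubic hcubic hr.hasDerivAt hg) hx hQ,
    mul_div_mul_left _ _ three_ne_zero]

/-- Let `r(t,θ)` be the implicitly defined function satisfying
`(1+3t) r³ − 9(1+t) r − 6√3 sin(3θ) = 0` with `r_A(θ)/(1+t) ≤ r(t,θ) ≤ r_A(θ)`.
Then the logarithmic derivative satisfies
`0 ≤ r_θ/r ≤ tan(π/6 − θ) ≤ √3` on `(−π/6, π/6)`. -/
theorem log_deriv_bounds (r : ℝ → ℝ → ℝ)
    (heq : ∀ t ∈ Set.Icc (0 : ℝ) (1 / 2), ∀ θ ∈ Set.Ioo (-(π / 6)) (π / 6),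
      (1 + 3 * t) * (r t θ) ^ 3 - 9 * (1 + t) * (r t θ)
        - 6 * Real.sqrt 3 * Real.sin (3 * θ) = 0)
    (hbd : ∀ t ∈ Set.Icc (0 : ℝ) (1 / 2), ∀ θ ∈ Set.Ioo (-(π / 6)) (π / 6),
      rA θ / (1 + t) ≤ r t θ ∧ r t θ ≤ rA θ)
    (hdiff : ∀ t ∈ Set.Icc (0 : ℝ) (1 / 2), ∀ θ ∈ Set.Ioo (-(π / 6)) (π / 6),
      DifferentiableAt ℝ (r t) θ) :
    ∀ t ∈ Set.Icc (0 : ℝ) (1 / 2), ∀ θ ∈ Set.Ioo (-(π / 6)) (π / 6),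
      0 ≤ deriv (r t) θ / r t θ ∧
      deriv (r t) θ / r t θ ≤ Real.tan (π / 6 - θ) ∧
      Real.tan (π / 6 - θ) ≤ Real.sqrt 3 := by
  intro t ht θ hθ
  obtain ⟨hθ₀, hθ₁⟩ := hθ
  have hu : 0 < 1 + t := by linarith [ht.1]
  have hφ : |π / 6 - θ| < π / 3 := abs_lt.2 ⟨by linarith, by linarith⟩
  have hlow := (hbd t ht θ ⟨hθ₀, hθ₁⟩).1
  have hAR : rA θ ≤ (1 + t) * r t θ := by rwa [div_le_iff₀' hu] at hlow
  have hR : 0 < r t θ := (div_pos (rA_pos hφ) hu).trans_le hlow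
  have hden := rA_add_sqrt_three_mul_sin_three_mul_pos hφ
  have hnum : 0 ≤ √3 * cos (3 * θ) :=
    mul_nonneg (sqrt_nonneg 3) (cos_nonneg_of_neg_pi_div_two_le_of_le (by linarith) (by linarith))
  have hratio : deriv (r t) θ / r t θ
      = √3 * cos (3 * θ) / ((1 + t) * r t θ + √3 * sin (3 * θ)) := by
    have hcubic : ∀ᶠ y in 𝓝 θ, (1 + 3 * t) * r t y ^ 3 - 9 * (1 + t) * r t y
        - 6 * √3 * sin (3 * y) = 0 := by
      filter_upwards [Ioo_mem_nhds hθ₀ hθ₁] with y hy using heq t ht y hy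
    exact deriv_div_eq_of_cubic_sin_three_mul hcubic (hdiff t ht θ ⟨hθ₀, hθ₁⟩) hR.ne'
      (by linarith)
  refine ⟨?_, ?_, (tan_pi_div_six_sub_lt_sqrt_three hθ₀ (by linarith [pi_pos])).le⟩
  · rw [hratio]
    exact div_nonneg hnum (by linarith)
  · rw [hratio, tan_pi_div_six_sub_eq_div (four_mul_cos_sq_sub_one_pos hφ).ne']
    exact div_le_div_of_nonneg_left hnum hden (by linarith)
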